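/- arXiv:2304.06220 — 2 statements merged into one kernel-verified Lean document; each statement's English description precedes it below -/
import Mathlib

section
/- (MacWilliams identity for split complete weight enumerators) Let C be an F_q-linear code of length n, χ a non-trivial additive character of F_q, and X_1,…,X_ℓ pairwise disjoint subsets with X_1 ⊔ ⋯ ⊔ X_ℓ = {1,…,n}. Define scwe_{C,X_1,…,X_ℓ} := Σ_{u∈C} Π_{i=1}^{ℓ} Π_{a∈F_q} x_{X_i,a}^{n_{a,X_i}(u)}. Then scwe_{C^⊥,X_1,…,X_ℓ}({x_{X_i,a}}) = (1/|C|) · scwe_{C,X_1,…,X_ℓ}( { Σ_{b∈F_q} χ(ab) x_{X_i,b} }_{a∈F_q, 1≤i≤ℓ} ). -/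
open Finset
open scoped Classical

noncomputable section

/-- `n_{a,X}(u) = #{ i ∈ X : u_i = a }`. -/
def count {F : Type*} {n : ℕ} (u : Fin n → F) (X : Finset (Fin n)) (a : F) : ℕ :=
  (X.filter (fun i => u i = a)).card

/-- The codewords of a linear code `C ⊆ F^n`, as a finset. -/
def codeFinset {F : Type*} [Field F] [Fintype F] {n : ℕ}
    (C : Submodule F (Fin n → F)) : Finset (Fin n → F) :=
  Finset.univ.filter (· ∈ C)

/-- The dual code `C^⊥ = {v : u·v = 0 for all u ∈ C}`, as a finset. -/
def dualFinset {F : Type*} [Field F] [Fintype F] {n : ℕ}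
    (C : Submodule F (Fin n → F)) : Finset (Fin n → F) :=
  Finset.univ.filter (fun v => ∀ u ∈ C, ∑ i, u i * v i = 0)

/-! Because the blocks `X i` partition the coordinates, the split monomial of a word `v` is
`∏ j, x (idx j) (v j)`, where `idx j` is the block containing `j`. Substituting the transformed
variables and expanding the product over `j` turns the monomial of `u` into
`∑ w, χ (u ⬝ᵥ w) * (monomial of w)`. Summing over `u ∈ C` leaves the character sums
`∑ u ∈ C, χ (u ⬝ᵥ w)`, which are `|C|` for `w ∈ C^⊥` and `0` otherwise: for `w ∉ C^⊥` the functional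
`u ↦ u ⬝ᵥ w` maps `C` onto `F`, so composing it with `χ` gives a nontrivial character of `C`. -/

open Matrix

lemma AddChar.map_sum_eq_prod {A M ι : Type*} [AddCommMonoid A] [CommMonoid M] (χ : AddChar A M)
    (s : Finset ι) (f : ι → A) : χ (∑ j ∈ s, f j) = ∏ j ∈ s, χ (f j) := by
  induction s using Finset.cons_induction with
  | empty => simp
  | cons a s ha ih => rw [sum_cons, prod_cons, AddChar.map_add_eq_mul, ih]

lemma AddChar.sum_comp_linearMap {F V R : Type*} [Field F] [AddCommGroup V] [Module F V]
    [Fintype V] [CommRing R] [IsDomain R] {χ : AddChar F R} (hχ : χ ≠ 1) (φ : V →ₗ[F] F) :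
    ∑ v, χ (φ v) = if φ = 0 then (Fintype.card V : R) else 0 := by
  have hcomp : χ.compAddMonoidHom φ.toAddMonoidHom = 0 ↔ φ = 0 := by
    refine ⟨fun h => ?_, fun h => by ext v; simp [h]⟩
    by_contra hφ
    obtain ⟨c, hc⟩ := AddChar.ne_one_iff.mp hχ
    obtain ⟨v, rfl⟩ := LinearMap.surjective hφ c
    exact hc (congrArg (· v) h)
  simpa only [hcomp, AddChar.compAddMonoidHom_apply, LinearMap.toAddMonoidHom_coe] using
    AddChar.sum_eq_ite (χ.compAddMonoidHom φ.toAddMonoidHom)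

lemma prod_sum_addChar_mul {ι F R : Type*} [Fintype ι] [DecidableEq ι] [Fintype F] [Semiring F]
    [CommSemiring R] (χ : AddChar F R) (u : ι → F) (y : ι → F → R) :
    ∏ j, ∑ b, χ (u j * b) * y j b = ∑ w : ι → F, χ (∑ j, u j * w j) * ∏ j, y j (w j) := by
  rw [prod_univ_sum, Fintype.piFinset_univ]
  simp_rw [AddChar.map_sum_eq_prod, prod_mul_distrib]

lemma exists_eq_fiber_of_partition {ι κ : Type*} [Fintype ι] [DecidableEq ι] [Fintype κ]
    [DecidableEq κ] (X : κ → Finset ι) (hdisj : Pairwise fun k l => Disjoint (X k) (X l))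
    (hunion : univ.biUnion X = univ) :
    ∃ idx : ι → κ, X = fun k => ({j | idx j = k} : Finset ι) := by
  have hcover : ∀ j, ∃ k, j ∈ X k := fun j => by
    simpa using mem_biUnion.mp (hunion ▸ mem_univ j : j ∈ univ.biUnion X)
  choose idx hidx using hcover
  refine ⟨idx, funext fun k => ext fun j => ⟨fun hj => ?_, fun hj => ?_⟩⟩
  · by_contra hne
    exact disjoint_left.mp (hdisj (Ne.symm (mt (mem_filter.mpr ⟨mem_univ j, ·⟩) hne))) hj (hidx j)
  · rw [← (mem_filter.mp hj).2]
    exact hidx j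

lemma prod_pow_count {F M : Type*} [Fintype F] [CommMonoid M] {n : ℕ} (f : F → M)
    (v : Fin n → F) (X : Finset (Fin n)) : ∏ a, f a ^ count v X a = ∏ j ∈ X, f (v j) := by
  rw [← prod_fiberwise' X v f]
  simp [count]

lemma prod_prod_pow_count_fiber {F M κ : Type*} [Fintype F] [Fintype κ] [DecidableEq κ]
    [CommMonoid M] {n : ℕ} (idx : Fin n → κ) (y : κ → F → M) (v : Fin n → F) :
    ∏ k, ∏ a, y k a ^ count v {j | idx j = k} a = ∏ j, y (idx j) (v j) := by
  simp_rw [prod_pow_count]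
  rw [← prod_fiberwise univ idx (fun j => y (idx j) (v j))]
  refine prod_congr rfl fun k _ => prod_congr rfl fun j hj => ?_
  rw [(mem_filter.mp hj).2]

section Code

variable {F : Type*} [Field F] [Fintype F] {n : ℕ}

lemma mem_dualFinset_iff (C : Submodule F (Fin n → F)) (v : Fin n → F) :
    v ∈ dualFinset C ↔ ((dotProductBilin F F).flip v).domRestrict C = 0 := by
  rw [dualFinset, mem_filter, LinearMap.ext_iff]
  simp [dotProduct]

lemma sum_codeFinset_addChar_dotProduct (C : Submodule F (Fin n → F)) {χ : AddChar F ℂ}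
    (hχ : χ ≠ 1) (v : Fin n → F) :
    ∑ u ∈ codeFinset C, χ (∑ j, u j * v j) = if v ∈ dualFinset C then (Nat.card C : ℂ) else 0 := by
  rw [sum_subtype (p := (· ∈ C)) _ (fun u => by simp [codeFinset]) (fun u => χ (∑ j, u j * v j)),
    Nat.card_eq_fintype_card]
  simp only [mem_dualFinset_iff]
  exact AddChar.sum_comp_linearMap hχ (((dotProductBilin F F).flip v).domRestrict C)

lemma sum_codeFinset_sum_addChar_mul (C : Submodule F (Fin n → F)) {χ : AddChar F ℂ}
    (hχ : χ ≠ 1) (g : (Fin n → F) → ℂ) :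
    ∑ u ∈ codeFinset C, ∑ w, χ (∑ j, u j * w j) * g w = Nat.card C * ∑ w ∈ dualFinset C, g w := by
  rw [sum_comm]
  simp_rw [← sum_mul, sum_codeFinset_addChar_dotProduct C hχ, ite_mul, zero_mul]
  rw [sum_ite_mem, univ_inter, mul_sum]

end Code

/-- MacWilliams identity for split complete weight enumerators. -/
theorem scwe_macwilliams {F : Type*} [Field F] [Fintype F] {n ℓ : ℕ}
    (C : Submodule F (Fin n → F)) (χ : AddChar F ℂ) (hχ : χ ≠ 1)
    (X : Fin ℓ → Finset (Fin n))
    (hdisj : ∀ i j, i ≠ j → Disjoint (X i) (X j))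
    (hunion : Finset.univ.biUnion X = Finset.univ)
    (x : Fin ℓ → F → ℂ) :
    ∑ v ∈ dualFinset C, ∏ i, ∏ a : F, x i a ^ count v (X i) a =
      (1 / (Nat.card C : ℂ)) *
        ∑ u ∈ codeFinset C, ∏ i, ∏ a : F, (∑ b : F, χ (a * b) * x i b) ^ count u (X i) a := by
  obtain ⟨idx, rfl⟩ := exists_eq_fiber_of_partition X hdisj hunion
  have hC : (Nat.card C : ℂ) ≠ 0 := Nat.cast_ne_zero.mpr Nat.card_pos.ne'
  simp_rw [prod_prod_pow_count_fiber, prod_sum_addChar_mul, sum_codeFinset_sum_addChar_mul C hχ,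
    one_div, inv_mul_cancel_left₀ hC]
end
end

section
/- Let P be a homogeneous polynomial of degree n in the 2q variables {x_a, y_a}_{a∈F_q} over ℂ, and define the polarization operator A·P := (1/n) Σ_{a∈F_q} x_a ∂P/∂y_a. If C is an F_q-linear code of length n whose set of codewords of each fixed composition forms a q-colored 1-design (i.e. for every composition s and every a ∈ F_q, the number of codewords of composition s having value a at coordinate i is independent of i), and C contains no nonzero codeword of weight less than 1, then for every i ∈ {1,…,n}: CJ_{C,{i}} = A · cwe_C. -/
/-!
A codeword `u` of composition `s` contributes `x_{u_i} y^(s - e_{u_i})` to `CJ_{C,{i}}`, while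
polarizing its term `y^s` of `cwe_C` gives `(1/n) ∑_a s_a x_a y^(s - e_a)`
`= (1/n) ∑_j x_{u_j} y^(s - e_{u_j})`. After summing over `C`, the design property makes the
sum over codewords of `x_{u_j} y^(s - e_{u_j})` independent of the coordinate `j`, so the average
over `j` is its value at `i`.
-/

open Finset
open scoped Classical

noncomputable section

open MvPolynomial

theorem Finset.sum_comp_eq_of_card_fiber_eq {ι κ M : Type*} [DecidableEq κ] [AddCommMonoid M]
    {s : Finset ι} {φ ψ : ι → κ} (h : ∀ k, #{x ∈ s | φ x = k} = #{x ∈ s | ψ x = k})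
    (g : κ → M) :
    ∑ x ∈ s, g (φ x) = ∑ x ∈ s, g (ψ x) := by
  have himage : s.image φ = s.image ψ := by
    ext k
    simp only [mem_image, ← card_pos, ← filter_nonempty_iff, h]
  rw [sum_comp, sum_comp, himage]
  exact sum_congr rfl fun k _ => by rw [h]

theorem MvPolynomial.pderiv_prod_X_pow {σ R : Type*} [Fintype σ] [CommSemiring R]
    (s : σ → ℕ) (a : σ) :
    pderiv a (∏ b, X b ^ s b : MvPolynomial σ R) =
      s a • ∏ b, X b ^ (s - Pi.single a 1 : σ → ℕ) b := by
  have prod_eq_monomial (t : σ → ℕ) :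
      (∏ b, X b ^ t b : MvPolynomial σ R) = monomial (Finsupp.equivFunOnFinite.symm t) 1 := by
    rw [monomial_eq, C_1, one_mul, Finsupp.prod_fintype _ _ fun _ => pow_zero _]
    rfl
  have hexp : Finsupp.equivFunOnFinite.symm (s - Pi.single a 1) =
      Finsupp.equivFunOnFinite.symm s - Finsupp.single a 1 := by
    ext b
    simp [Pi.single_apply, Finsupp.single_apply, eq_comm]
  rw [prod_eq_monomial, prod_eq_monomial, pderiv_monomial, hexp, ← map_nsmul, nsmul_one]
  simp

section Count

variable {F : Type*} {n : ℕ}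

theorem count_singleton (u : Fin n → F) (i : Fin n) : count u {i} = Pi.single (u i) 1 := by
  ext a
  rcases eq_or_ne (u i) a with rfl | h
  · simp [count, filter_singleton]
  · simp [count, filter_singleton, h, h.symm]

theorem count_univ_sdiff_singleton (u : Fin n → F) (i : Fin n) :
    count u (univ \ {i}) = count u univ - Pi.single (u i) 1 := by
  ext a
  rw [Pi.sub_apply, ← count_singleton, count, count, count, sdiff_singleton_eq_erase,
    filter_erase, card_erase_eq_ite, filter_singleton]
  split_ifs <;> simp_all

theorem sum_count_univ_nsmul [Fintype F] {M : Type*} [AddCommMonoid M] (u : Fin n → F)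
    (f : F → M) : ∑ a, count u univ a • f a = ∑ j, f (u j) := by
  rw [← sum_fiberwise' univ u f]
  simp [count]

end Count

section Polarization

variable {F : Type*} [Fintype F] (R : Type*) [CommSemiring R]

/-- `x_c y^(s - e_c)`: the monomial contributed to `CJ_{C,{i}}` by a codeword of composition
`s` whose `i`-th entry is `c`. -/
def polarMonomial (s : F → ℕ) (c : F) : MvPolynomial (F ⊕ F) R :=
  X (Sum.inl c) * ∏ b, X (Sum.inr b) ^ (s - Pi.single c 1 : F → ℕ) b

theorem prod_X_pow_count_singleton {n : ℕ} (u : Fin n → F) (i : Fin n) :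
    ∏ a, (X (Sum.inl a) : MvPolynomial (F ⊕ F) R) ^ count u {i} a *
        X (Sum.inr a) ^ count u (univ \ {i}) a = polarMonomial R (count u univ) (u i) := by
  rw [count_singleton, count_univ_sdiff_singleton, prod_mul_distrib, polarMonomial]
  congr 1
  simp [Pi.single_apply, pow_ite]

theorem X_inl_mul_pderiv_prod_X_inr_pow (s : F → ℕ) (a : F) :
    X (Sum.inl a) * pderiv (Sum.inr a) (∏ b, X (Sum.inr b) ^ s b : MvPolynomial (F ⊕ F) R) =
      s a • polarMonomial R s a := by
  have hrename : (∏ b, X (Sum.inr b) ^ s b : MvPolynomial (F ⊕ F) R) =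
      rename Sum.inr (∏ b, X b ^ s b) := by
    simp [map_prod]
  rw [hrename, pderiv_rename Sum.inr_injective, pderiv_prod_X_pow, map_nsmul, mul_smul_comm,
    polarMonomial]
  simp [map_prod]

end Polarization

/-- `Sum.inl a` plays the role of `x_a` and `Sum.inr a` that of `y_a`. -/
theorem cj_eq_polarized_cwe_general {F : Type*} [Field F] [Fintype F] {n : ℕ}
    (C : Submodule F (Fin n → F))
    (hdes : ∀ (s : F → ℕ) (a : F) (i j : Fin n),
      ((codeFinset C).filter (fun u => (∀ b, count u Finset.univ b = s b) ∧ u i = a)).card =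
      ((codeFinset C).filter (fun u => (∀ b, count u Finset.univ b = s b) ∧ u j = a)).card)
    (i : Fin n) :
    (∑ u ∈ codeFinset C, ∏ a : F,
        (X (Sum.inl a) : MvPolynomial (F ⊕ F) ℂ) ^ count u {i} a *
          (X (Sum.inr a) : MvPolynomial (F ⊕ F) ℂ) ^ count u (Finset.univ \ {i}) a) =
      MvPolynomial.C ((n : ℂ))⁻¹ *
        ∑ a : F, (X (Sum.inl a) : MvPolynomial (F ⊕ F) ℂ) *
          pderiv (Sum.inr a)
            (∑ u ∈ codeFinset C, ∏ b : F,
              (X (Sum.inr b) : MvPolynomial (F ⊕ F) ℂ) ^ count u Finset.univ b) := by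
  have hdesign (j : Fin n) : ∑ u ∈ codeFinset C, polarMonomial ℂ (count u univ) (u j) =
      ∑ u ∈ codeFinset C, polarMonomial ℂ (count u univ) (u i) := by
    refine sum_comp_eq_of_card_fiber_eq (φ := fun u => (count u univ, u j))
      (ψ := fun u => (count u univ, u i)) (fun k => ?_) fun k => polarMonomial ℂ k.1 k.2
    have hfiber (l : Fin n) : {u ∈ codeFinset C | (count u univ, u l) = k} =
        {u ∈ codeFinset C | (∀ b, count u univ b = k.1 b) ∧ u l = k.2} :=
      filter_congr fun u _ => by rw [Prod.ext_iff, funext_iff]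
    rw [hfiber, hfiber]
    exact hdes k.1 k.2 j i
  have hn : (n : ℂ) ≠ 0 := Nat.cast_ne_zero.mpr i.pos.ne'
  calc _ = ∑ u ∈ codeFinset C, polarMonomial ℂ (count u univ) (u i) :=
        sum_congr rfl fun u _ => prod_X_pow_count_singleton ℂ u i
    _ = MvPolynomial.C (n : ℂ)⁻¹ *
          ∑ j : Fin n, ∑ u ∈ codeFinset C, polarMonomial ℂ (count u univ) (u j) := by
        rw [sum_congr rfl fun j _ => hdesign j, sum_const, card_univ, Fintype.card_fin,
          nsmul_eq_mul, ← mul_assoc, ← map_natCast MvPolynomial.C, ← C_mul,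
          inv_mul_cancel₀ hn, C_1, one_mul]
    _ = _ := by
        congr 1
        simp_rw [map_sum, mul_sum, X_inl_mul_pderiv_prod_X_inr_pow]
        rw [sum_comm, sum_comm (s := univ)]
        exact sum_congr rfl fun u _ => (sum_count_univ_nsmul u _).symm

/-- If the codewords of each fixed composition of `C` form a `q`-colored `1`-design and `C`
has no nonzero codeword of Hamming weight less than `1`, then for every coordinate `i` the
complete Jacobi polynomial `CJ_{C,{i}}` equals the polarization `A · cwe_C`, where
`A·P = (1/n) ∑_a x_a ∂P/∂y_a` (variables `Sum.inl a = x_a`, `Sum.inr a = y_a`). -/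
theorem cj_eq_polarized_cwe {F : Type*} [Field F] [Fintype F] {n : ℕ}
    (C : Submodule F (Fin n → F))
    (hdes : ∀ (s : F → ℕ) (a : F) (i j : Fin n),
      ((codeFinset C).filter (fun u => (∀ b, count u Finset.univ b = s b) ∧ u i = a)).card =
      ((codeFinset C).filter (fun u => (∀ b, count u Finset.univ b = s b) ∧ u j = a)).card)
    (hwt : ∀ u ∈ C, u ≠ 0 → 1 ≤ (Finset.univ.filter (fun i => u i ≠ 0)).card)
    (i : Fin n) :
    (∑ u ∈ codeFinset C, ∏ a : F,
        (X (Sum.inl a) : MvPolynomial (F ⊕ F) ℂ) ^ count u {i} a *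
          (X (Sum.inr a) : MvPolynomial (F ⊕ F) ℂ) ^ count u (Finset.univ \ {i}) a) =
      MvPolynomial.C ((n : ℂ))⁻¹ *
        ∑ a : F, (X (Sum.inl a) : MvPolynomial (F ⊕ F) ℂ) *
          pderiv (Sum.inr a)
            (∑ u ∈ codeFinset C, ∏ b : F,
              (X (Sum.inr b) : MvPolynomial (F ⊕ F) ℂ) ^ count u Finset.univ b) :=
  cj_eq_polarized_cwe_general C hdes i
end
end
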